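/- arXiv:2503.17764 — 2 statements merged into one kernel-verified Lean document; each statement's English description precedes it below -/
import Mathlib

section
/- (Generalized Singleton Bound) Let C be an [n,k] linear code over F_q. Then for every 1 ≤ r ≤ k, d_r(C) ≤ n − k + r. -/
/-!
Pick a set `I` of `k - r` coordinates. The vectors of `C` vanishing on `I` form the kernel of
the restriction `C → F^I`, which has dimension at least `k - (k - r) = r`.
Any `r`-dimensional subspace of it is supported on the `n - (k - r)` coordinates outside `I`.
-/

open Classical

/-- The support of a linear subspace `D` of `ι → F`:
the set of coordinates at which some element of `D` is nonzero. -/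
def Submodule.suppSet {F ι : Type*} [Field F] (D : Submodule F (ι → F)) : Set ι :=
  {i | ∃ c ∈ D, c i ≠ 0}

/-- The `r`-th generalized Hamming weight of a linear code `C ⊆ F^ι`:
the minimum support size of an `r`-dimensional subcode of `C`. -/
noncomputable def ghw {F ι : Type*} [Field F] (C : Submodule F (ι → F)) (r : ℕ) : ℕ :=
  sInf {w | ∃ D : Submodule F (ι → F),
    D ≤ C ∧ Module.finrank F D = r ∧ D.suppSet.ncard = w}

/-- The `r`-th relative generalized Hamming weight of the nested pair `C₂ ⊆ C₁`:
the minimum support size of an `r`-dimensional subcode `D` of `C₁` with `D ∩ C₂ = 0`. -/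
noncomputable def rghw {F ι : Type*} [Field F] (C₁ C₂ : Submodule F (ι → F)) (r : ℕ) : ℕ :=
  sInf {w | ∃ D : Submodule F (ι → F),
    D ≤ C₁ ∧ D ⊓ C₂ = ⊥ ∧ Module.finrank F D = r ∧ D.suppSet.ncard = w}

/-- The dual code of `C ⊆ F^n` with respect to the standard Euclidean inner product. -/
def dualCode {F : Type*} [Field F] {n : ℕ} (C : Submodule F (Fin n → F)) :
    Submodule F (Fin n → F) where
  carrier := {x | ∀ c ∈ C, ∑ i, x i * c i = 0}
  add_mem' := by
    intro a b ha hb c hc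
    simp only [Set.mem_setOf_eq] at *
    simp [Pi.add_apply, add_mul, Finset.sum_add_distrib, ha c hc, hb c hc]
  zero_mem' := by simp
  smul_mem' := by
    intro t a ha c hc
    simp only [Set.mem_setOf_eq] at *
    simp [Pi.smul_apply, smul_eq_mul, mul_assoc, ← Finset.mul_sum, ha c hc]

section Support

variable {F ι : Type*} [Field F]

theorem ghw_finrank_le_ncard_suppSet {C D : Submodule F (ι → F)} (hDC : D ≤ C) :
    ghw C (Module.finrank F D) ≤ D.suppSet.ncard :=
  Nat.sInf_le ⟨D, hDC, rfl, rfl⟩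

theorem Submodule.suppSet_subset_compl_of_le_ker_funLeft {D : Submodule F (ι → F)} {s : Set ι}
    (hD : D ≤ LinearMap.ker (LinearMap.funLeft F F ((↑) : s → ι))) : D.suppSet ⊆ sᶜ := by
  rintro i ⟨c, hc, hci⟩ his
  exact hci (congr_fun (hD hc) ⟨i, his⟩)

end Support

section Dimension

variable {K V W : Type*} [DivisionRing K] [AddCommGroup V] [Module K V] [AddCommGroup W]
  [Module K W]

theorem Submodule.exists_le_finrank_eq {U : Submodule K V} {r : ℕ}
    (hr : r ≤ Module.finrank K U) : ∃ D ≤ U, Module.finrank K D = r := by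
  obtain ⟨f, hf⟩ := exists_linearIndependent_of_le_finrank hr
  refine ⟨Submodule.span K (Set.range (U.subtype ∘ f)), ?_, ?_⟩
  · rw [Submodule.span_le]
    rintro _ ⟨i, rfl⟩
    exact (f i).2
  · rw [finrank_span_eq_card (hf.map' U.subtype U.ker_subtype), Fintype.card_fin]

theorem finrank_sub_finrank_le_finrank_inf_ker [FiniteDimensional K V]
    [FiniteDimensional K W] (C : Submodule K V) (f : V →ₗ[K] W) :
    Module.finrank K C - Module.finrank K W ≤ Module.finrank K ↥(C ⊓ LinearMap.ker f) := by
  have hmod := Submodule.finrank_sup_add_finrank_inf_eq C (LinearMap.ker f)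
  have hsup := Submodule.finrank_le (C ⊔ LinearMap.ker f)
  have hrank := LinearMap.finrank_range_add_finrank_ker f
  have hrange := Submodule.finrank_le (LinearMap.range f)
  omega

end Dimension

theorem statement_2_general {F : Type*} [Field F] {n k : ℕ}
    (C : Submodule F (Fin n → F)) (hk : Module.finrank F C = k) :
    ∀ r : ℕ, 1 ≤ r → r ≤ k → ghw C r ≤ n - k + r := by
  intro r _ hrk
  have hkn : k ≤ n := by simpa [hk] using Submodule.finrank_le C
  obtain ⟨I, -, hI⟩ := Finset.exists_subset_card_eq (s := (Finset.univ : Finset (Fin n)))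
    (n := k - r) (by rw [Finset.card_univ, Fintype.card_fin]; omega)
  set π := LinearMap.funLeft F F (Subtype.val : ↥(I : Set (Fin n)) → Fin n)
  have hr : r ≤ Module.finrank F ↥(C ⊓ LinearMap.ker π) := by
    have := finrank_sub_finrank_le_finrank_inf_ker C π
    simp only [hk, Module.finrank_fintype_fun_eq_card, Finset.coe_sort_coe, Fintype.card_coe,
      hI] at this
    omega
  obtain ⟨D, hD, hDr⟩ := Submodule.exists_le_finrank_eq hr
  have hsupp := Submodule.suppSet_subset_compl_of_le_ker_funLeft (hD.trans inf_le_right)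
  calc ghw C r = ghw C (Module.finrank F D) := by rw [hDr]
    _ ≤ D.suppSet.ncard := ghw_finrank_le_ncard_suppSet (hD.trans inf_le_left)
    _ ≤ ((I : Set (Fin n))ᶜ).ncard := Set.ncard_le_ncard hsupp
    _ = n - (k - r) := by
        rw [← Finset.coe_compl, Set.ncard_coe_finset, Finset.card_compl, hI, Fintype.card_fin]
    _ ≤ n - k + r := by omega

/-- Generalized Singleton Bound: for an `[n,k]` linear code `C`,
`d_r(C) ≤ n - k + r` for every `1 ≤ r ≤ k`. -/
theorem statement_2 {F : Type*} [Field F] [Fintype F] {n k : ℕ}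
    (C : Submodule F (Fin n → F)) (hk : Module.finrank F C = k) :
    ∀ r : ℕ, 1 ≤ r → r ≤ k → ghw C r ≤ n - k + r :=
  statement_2_general C hk
end

section
/- (Monotonicity and Singleton-type bound for RGHWs) Let C_2 ⊂ C_1 ⊆ F_q^n be linear codes with dim C_1 = k_1 and dim C_2 = k_2, k_2 < k_1. Then 1 ≤ M_1(C_1,C_2) < M_2(C_1,C_2) < ··· < M_{k_1−k_2}(C_1,C_2) ≤ n, and moreover M_r(C_1,C_2) ≤ n − k_1 + r for every 1 ≤ r ≤ k_1 − k_2. -/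
open Classical

/-!
Cutting a code `D` by the coordinate hyperplane `{x | x i = 0}` at a coordinate `i` of its
support lowers its dimension by exactly one and its support size by at least one. Repeated cuts
along the support of `C₂` (at most `k₂` of them) produce a subcode `D` of `C₁` of dimension
`k₁ - k₂` meeting `C₂` trivially and supported on at most `n - k₂` coordinates. Cutting `D`
down to dimension `r` gives `M_r ≤ (n - k₂) - (k₁ - k₂ - r) = n - k₁ + r`, and cutting a
minimizer for `M_{r+1}` once gives `M_r < M_{r+1}`.
-/

open Module Submodule LinearMap

namespace Submodule

variable {F ι : Type*} [Field F]

lemma suppSet_mono {D D' : Submodule F (ι → F)} (h : D ≤ D') : D.suppSet ⊆ D'.suppSet :=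
  fun _ ⟨c, hc, hci⟩ => ⟨c, h hc, hci⟩

lemma suppSet_nonempty_of_ne_bot {D : Submodule F (ι → F)} (hD : D ≠ ⊥) :
    D.suppSet.Nonempty := by
  obtain ⟨c, hc, hc0⟩ := exists_mem_ne_zero_of_ne_bot hD
  obtain ⟨i, hi⟩ := Function.ne_iff.mp hc0
  exact ⟨i, c, hc, hi⟩

lemma suppSet_inf_ker_proj_ssubset {D : Submodule F (ι → F)} {i : ι} (hi : i ∈ D.suppSet) :
    (D ⊓ ker (proj i)).suppSet ⊂ D.suppSet := by
  refine Set.ssubset_of_subset_of_ssubset ?_ (Set.sdiff_singleton_ssubset.mpr hi)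
  rintro j ⟨c, ⟨hcD, hci⟩, hcj⟩
  refine ⟨⟨c, hcD, hcj⟩, fun hji => hcj ?_⟩
  rw [Set.mem_singleton_iff.mp hji]
  exact hci

lemma suppSet_ncard_inf_ker_proj_lt [Finite ι] {D : Submodule F (ι → F)} {i : ι}
    (hi : i ∈ D.suppSet) : (D ⊓ ker (proj i)).suppSet.ncard < D.suppSet.ncard :=
  Set.ncard_lt_ncard (suppSet_inf_ker_proj_ssubset hi) (Set.toFinite _)

lemma finrank_inf_ker_proj_add_one {D : Submodule F (ι → F)} [FiniteDimensional F D] {i : ι}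
    (hi : i ∈ D.suppSet) : finrank F ↥(D ⊓ ker (proj i)) + 1 = finrank F D := by
  obtain ⟨c, hc, hci⟩ := hi
  let f : Module.Dual F D := (proj i).comp D.subtype
  have hf : f ≠ 0 := fun h => hci (congrArg (· ⟨c, hc⟩) h :)
  rw [← Module.Dual.finrank_ker_add_one_of_ne_zero hf, ← map_comap_subtype,
    finrank_map_subtype_eq, ker_comp]

variable [Finite ι]

lemma exists_le_finrank_eq_suppSet_ncard_add_le {r : ℕ} :
    ∀ (m : ℕ) (D : Submodule F (ι → F)), finrank F D = r + m →
      ∃ D' ≤ D, finrank F D' = r ∧ D'.suppSet.ncard + m ≤ D.suppSet.ncard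
  | 0, D, hD => ⟨D, le_rfl, hD, le_rfl⟩
  | m + 1, D, hD => by
    have hD₀ : D ≠ ⊥ := fun h => by rw [← finrank_eq_zero] at h; omega
    obtain ⟨i, hi⟩ := suppSet_nonempty_of_ne_bot hD₀
    obtain ⟨D', hD'le, hD'r, hD'supp⟩ := exists_le_finrank_eq_suppSet_ncard_add_le (r := r) m
      (D ⊓ ker (proj i)) (by have := finrank_inf_ker_proj_add_one hi; omega)
    have := suppSet_ncard_inf_ker_proj_lt hi
    exact ⟨D', hD'le.trans inf_le_left, hD'r, by omega⟩

lemma exists_complement_suppSet_ncard_add_finrank_le :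
    ∀ (k : ℕ) (C₁ C₂ : Submodule F (ι → F)), C₂ ≤ C₁ → finrank F C₂ = k →
      ∃ D ≤ C₁, D ⊓ C₂ = ⊥ ∧ finrank F D + k = finrank F C₁ ∧
        D.suppSet.ncard + k ≤ C₁.suppSet.ncard
  | 0, C₁, C₂, _, hk => by
    rw [finrank_eq_zero] at hk
    exact ⟨C₁, le_rfl, by simp [hk], rfl, le_rfl⟩
  | k + 1, C₁, C₂, hC, hk => by
    have hC₂ : C₂ ≠ ⊥ := fun h => by rw [← finrank_eq_zero] at h; omega
    obtain ⟨i, hi⟩ := suppSet_nonempty_of_ne_bot hC₂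
    have hi₁ : i ∈ C₁.suppSet := suppSet_mono hC hi
    obtain ⟨D, hD, hDC₂, hDrank, hDsupp⟩ :=
      exists_complement_suppSet_ncard_add_finrank_le k (C₁ ⊓ ker (proj i))
        (C₂ ⊓ ker (proj i)) (inf_le_inf_right _ hC)
        (by have := finrank_inf_ker_proj_add_one hi; omega)
    refine ⟨D, hD.trans inf_le_left, ?_, ?_, ?_⟩
    · exact eq_bot_iff.mpr fun x hx => hDC₂.le ⟨hx.1, hx.2, (hD hx.1).2⟩
    · have := finrank_inf_ker_proj_add_one hi₁
      omega
    · have := suppSet_ncard_inf_ker_proj_lt hi₁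
      omega

end Submodule

section RelativeGeneralizedHammingWeight

variable {F ι : Type*} [Field F] {C₁ C₂ D : Submodule F (ι → F)}

lemma rghw_le_suppSet_ncard (hD₁ : D ≤ C₁) (hD₂ : D ⊓ C₂ = ⊥) :
    rghw C₁ C₂ (finrank F D) ≤ D.suppSet.ncard :=
  Nat.sInf_le ⟨D, hD₁, hD₂, rfl, rfl⟩

variable [Finite ι]

lemma rghw_add_le_suppSet_ncard (hD₁ : D ≤ C₁) (hD₂ : D ⊓ C₂ = ⊥) {r m : ℕ}
    (hD : finrank F D = r + m) : rghw C₁ C₂ r + m ≤ D.suppSet.ncard := by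
  obtain ⟨D', hD', rfl, hsupp⟩ := exists_le_finrank_eq_suppSet_ncard_add_le m D hD
  have := rghw_le_suppSet_ncard (hD'.trans hD₁) ((disjoint_iff.mpr hD₂).mono_left hD').eq_bot
  omega

lemma rghw_lt_rghw_succ (hD₁ : D ≤ C₁) (hD₂ : D ⊓ C₂ = ⊥) {r : ℕ}
    (hD : r + 1 ≤ finrank F D) : rghw C₁ C₂ r < rghw C₁ C₂ (r + 1) := by
  obtain ⟨D', hD', hD'r, -⟩ :=
    exists_le_finrank_eq_suppSet_ncard_add_le (r := r + 1) _ D (Nat.add_sub_of_le hD).symm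
  obtain ⟨E, hE₁, hE₂, hEr, hEsupp⟩ : rghw C₁ C₂ (r + 1) ∈ _ :=
    Nat.sInf_mem
      ⟨_, D', hD'.trans hD₁, ((disjoint_iff.mpr hD₂).mono_left hD').eq_bot, hD'r, rfl⟩
  have := rghw_add_le_suppSet_ncard hE₁ hE₂ hEr
  omega

end RelativeGeneralizedHammingWeight

theorem statement_5_general {F : Type*} [Field F] {n k₁ k₂ : ℕ}
    (C₁ C₂ : Submodule F (Fin n → F)) (hsub : C₂ ≤ C₁)
    (h1 : Module.finrank F C₁ = k₁) (h2 : Module.finrank F C₂ = k₂) (hlt : k₂ < k₁) :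
    1 ≤ rghw C₁ C₂ 1 ∧
    (∀ r : ℕ, 1 ≤ r → r < k₁ - k₂ → rghw C₁ C₂ r < rghw C₁ C₂ (r + 1)) ∧
    rghw C₁ C₂ (k₁ - k₂) ≤ n ∧
    (∀ r : ℕ, 1 ≤ r → r ≤ k₁ - k₂ → rghw C₁ C₂ r ≤ n - k₁ + r) := by
  obtain ⟨D, hD₁, hD₂, hDrank, hDsupp⟩ :=
    exists_complement_suppSet_ncard_add_finrank_le k₂ C₁ C₂ hsub h2
  have hC₁supp : C₁.suppSet.ncard ≤ n := by simpa using Set.ncard_le_card C₁.suppSet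
  have strict (r : ℕ) (hr : r < k₁ - k₂) : rghw C₁ C₂ r < rghw C₁ C₂ (r + 1) :=
    rghw_lt_rghw_succ hD₁ hD₂ (by omega)
  have bound (r : ℕ) (hr : r ≤ k₁ - k₂) : rghw C₁ C₂ r + (k₁ - r) ≤ n := by
    have := rghw_add_le_suppSet_ncard hD₁ hD₂ (r := r) (m := k₁ - k₂ - r) (by omega)
    omega
  refine ⟨Nat.one_le_of_lt (strict 0 (by omega)), fun r _ hr => strict r hr, ?_, ?_⟩
  · have := bound _ le_rfl
    omega
  · intro r _ hr
    have := bound r hr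
    omega

/-- Monotonicity and Singleton-type bound for RGHWs: for nested codes
`C₂ ⊂ C₁ ⊆ F_q^n` with `dim C₁ = k₁ > k₂ = dim C₂`,
`1 ≤ M_1(C₁,C₂) < ⋯ < M_{k₁-k₂}(C₁,C₂) ≤ n` and `M_r(C₁,C₂) ≤ n - k₁ + r`. -/
theorem statement_5 {F : Type*} [Field F] [Fintype F] {n k₁ k₂ : ℕ}
    (C₁ C₂ : Submodule F (Fin n → F)) (hsub : C₂ ≤ C₁)
    (h1 : Module.finrank F C₁ = k₁) (h2 : Module.finrank F C₂ = k₂) (hlt : k₂ < k₁) :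
    1 ≤ rghw C₁ C₂ 1 ∧
    (∀ r : ℕ, 1 ≤ r → r < k₁ - k₂ → rghw C₁ C₂ r < rghw C₁ C₂ (r + 1)) ∧
    rghw C₁ C₂ (k₁ - k₂) ≤ n ∧
    (∀ r : ℕ, 1 ≤ r → r ≤ k₁ - k₂ → rghw C₁ C₂ r ≤ n - k₁ + r) :=
  statement_5_general C₁ C₂ hsub h1 h2 hlt
end
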